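/- arXiv:2102.03593 — 2 statements merged into one kernel-verified Lean document; each statement's English description precedes it below -/
import Mathlib

section
/- For the homoclinic solution w of w'' - w + w^p = 0 with w(±∞)=0, one has the identity ∫_ℝ w² dx = 2σ ∫_ℝ (w')² dx, where σ = (p+1)/(p-1) - 1/2. -/
/-!
Write `a = (p - 1) / 2` and `b = 2 / (p - 1) = 1 / a`, so that `w = C * cosh (a x) ^ (-b)` and
`w' = -a b tanh (a x) w`. Since `tanh' = 1 - tanh ^ 2`, the function `w ^ 2 tanh (a x)` has derivative
`a w ^ 2 - a (2 b + 1) tanh (a x) ^ 2 w ^ 2`; it is integrable and so is its derivative (both are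
dominated by `w ^ 2`, which decays like `exp (-|x|)`), hence that derivative has integral zero.
This gives `∫ w ^ 2 = (2 b + 1) ∫ tanh (a x) ^ 2 w ^ 2 = (2 b + 1) / (a b) ^ 2 ∫ w' ^ 2`, and here
`a b = 1` and `2 b + 1 = 2 σ`.
-/

open Real MeasureTheory

namespace Real

theorem hasDerivAt_tanh (x : ℝ) : HasDerivAt tanh (1 - tanh x ^ 2) x := by
  have hcosh := (cosh_pos x).ne'
  have hquot := (hasDerivAt_sinh x).div (hasDerivAt_cosh x) hcosh
  rw [show tanh = sinh / cosh from funext tanh_eq_sinh_div_cosh]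
  refine hquot.congr_deriv ?_
  simp only [Pi.div_apply]
  field_simp

theorem integrable_exp_neg_abs : Integrable fun x : ℝ => exp (-|x|) := by
  rw [← integrableOn_univ, ← Set.Iic_union_Ioi (a := 0)]
  refine IntegrableOn.union ?_ ?_
  · refine (integrableOn_exp_Iic 0).congr_fun (fun x hx => ?_) measurableSet_Iic
    rw [abs_of_nonpos hx, neg_neg]
  · refine (exp_neg_integrableOn_Ioi 0 one_pos).congr_fun (fun x hx => ?_) measurableSet_Ioi
    simp [abs_of_pos (Set.mem_Ioi.mp hx)]

theorem cosh_rpow_neg_le {s : ℝ} (hs : 0 ≤ s) (x : ℝ) : cosh x ^ (-s) ≤ 2 ^ s * exp (-|s * x|) := by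
  have hlow : exp |x| / 2 ≤ cosh x := by
    rw [← cosh_abs, cosh_eq]
    linarith [exp_pos (-|x|)]
  calc cosh x ^ (-s) ≤ (exp |x| / 2) ^ (-s) :=
        rpow_le_rpow_of_nonpos (by positivity) hlow (by linarith)
    _ = 2 ^ s * exp (-|s * x|) := by
        rw [div_rpow (exp_pos _).le zero_le_two, ← exp_mul, rpow_neg zero_le_two, abs_mul,
          abs_of_nonneg hs]
        field_simp

theorem integrable_cosh_mul_rpow_neg {a s : ℝ} (ha : a ≠ 0) (hs : 0 < s) :
    Integrable fun x => cosh (a * x) ^ (-s) := by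
  have hdom : Integrable fun x => 2 ^ s * exp (-|s * x|) :=
    (integrable_exp_neg_abs.comp_mul_left' hs.ne').const_mul _
  refine (hdom.comp_mul_left' ha).mono'
    (by fun_prop : Measurable fun x => cosh (a * x) ^ (-s)).aestronglyMeasurable
    (ae_of_all _ fun x => ?_)
  rw [norm_of_nonneg (rpow_nonneg (cosh_pos _).le _)]
  exact cosh_rpow_neg_le hs.le _

theorem hasDerivAt_cosh_mul_rpow_neg (a b x : ℝ) :
    HasDerivAt (fun x => cosh (a * x) ^ (-b)) (-(a * b) * tanh (a * x) * cosh (a * x) ^ (-b)) x := by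
  have hcosh := (cosh_pos (a * x)).ne'
  have h := (((hasDerivAt_id' x).const_mul a).cosh).rpow_const (p := -b) (Or.inl hcosh)
  convert h using 1
  rw [rpow_sub_one hcosh, tanh_eq_sinh_div_cosh]
  field_simp

theorem hasDerivAt_tanh_mul (a x : ℝ) :
    HasDerivAt (fun x => tanh (a * x)) (a * (1 - tanh (a * x) ^ 2)) x :=
  ((hasDerivAt_tanh (a * x)).comp x ((hasDerivAt_id' x).const_mul a)).congr_deriv (by ring)

theorem integral_deriv_cosh_mul_rpow_neg_sq {a b : ℝ} (ha : a ≠ 0) (hb : 0 < b) :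
    (2 * b + 1) * ∫ x, deriv (fun x => cosh (a * x) ^ (-b)) x ^ 2 =
      (a * b) ^ 2 * ∫ x, (cosh (a * x) ^ (-b)) ^ 2 := by
  set f := fun x => cosh (a * x) ^ (-b)
  set t := fun x => tanh (a * x)
  have hf : ∀ x, HasDerivAt f (-(a * b) * (t x * f x)) x := fun x =>
    (hasDerivAt_cosh_mul_rpow_neg a b x).congr_deriv (by ring)
  have ht : ∀ x, HasDerivAt t (a * (1 - t x ^ 2)) x := hasDerivAt_tanh_mul a
  have hf_cont : Continuous f := continuous_iff_continuousAt.2 fun x => (hf x).continuousAt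
  have ht_cont : Continuous t := continuous_iff_continuousAt.2 fun x => (ht x).continuousAt
  have hf_int : Integrable fun x => f x ^ 2 := by
    refine (integrable_cosh_mul_rpow_neg ha (by positivity : 0 < 2 * b)).congr
      (ae_of_all _ fun x => ?_)
    change cosh (a * x) ^ (-(2 * b)) = (cosh (a * x) ^ (-b)) ^ 2
    rw [← rpow_natCast, ← rpow_mul (cosh_pos _).le]
    ring_nf
  have htf_int : Integrable fun x => (t x * f x) ^ 2 := by
    refine hf_int.mono' (by fun_prop) (ae_of_all _ fun x => ?_)
    rw [norm_of_nonneg (sq_nonneg _), mul_pow]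
    exact mul_le_of_le_one_left (sq_nonneg _) (tanh_sq_lt_one _).le
  have hg_int : Integrable fun x => f x ^ 2 * t x := by
    refine hf_int.mono' (by fun_prop) (ae_of_all _ fun x => ?_)
    rw [norm_mul, norm_of_nonneg (sq_nonneg _)]
    exact mul_le_of_le_one_right (sq_nonneg _) (abs_tanh_lt_one _).le
  have hg : ∀ x, HasDerivAt (fun x => f x ^ 2 * t x)
      (a * f x ^ 2 - a * (2 * b + 1) * (t x * f x) ^ 2) x := fun x =>
    (((hf x).pow 2).mul (ht x)).congr_deriv (by rw [Pi.pow_apply]; ring)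
  have hzero := integral_eq_zero_of_hasDerivAt_of_integrable hg
    ((hf_int.const_mul a).sub (htf_int.const_mul _)) hg_int
  rw [integral_sub (hf_int.const_mul a) (htf_int.const_mul _), integral_const_mul,
    integral_const_mul, mul_assoc, sub_eq_zero] at hzero
  have hderiv : ∀ x, deriv f x ^ 2 = (a * b) ^ 2 * (t x * f x) ^ 2 := fun x => by
    rw [(hf x).deriv]; ring
  simp only [hderiv, integral_const_mul]
  linear_combination -(a * b) ^ 2 * mul_left_cancel₀ ha hzero

end Real

theorem stmt_3 (p σ : ℝ) (hp : 1 < p) (hσ : σ = (p + 1) / (p - 1) - 1 / 2)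
    (w : ℝ → ℝ)
    (hw : ∀ x : ℝ, w x = ((p + 1) / 2) ^ (1 / (p - 1)) *
      (Real.exp ((p - 1) * x / 2) + Real.exp (-(p - 1) * x / 2)) ^ (-2 / (p - 1))) :
    (∫ x : ℝ, (w x) ^ 2) = 2 * σ * ∫ x : ℝ, (deriv w x) ^ 2 := by
  set a := (p - 1) / 2 with ha
  set b := 2 / (p - 1) with hb
  set C := ((p + 1) / 2) ^ (1 / (p - 1)) * 2 ^ (-b)
  have hp1 : p - 1 ≠ 0 := by linarith
  have hw_eq : w = fun x => C * cosh (a * x) ^ (-b) := funext fun x => by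
    have hsum : exp ((p - 1) * x / 2) + exp (-(p - 1) * x / 2) = 2 * cosh (a * x) := by
      rw [cosh_eq, ha]; ring_nf
    rw [hw, hsum, mul_rpow zero_le_two (cosh_pos _).le, neg_div, mul_assoc]
  have key := integral_deriv_cosh_mul_rpow_neg_sq (a := a) (b := b) (by positivity) (by positivity)
  rw [show a * b = 1 by rw [ha, hb]; field_simp, one_pow, one_mul] at key
  have h2σ : 2 * σ = 2 * b + 1 := by rw [hσ, hb]; field_simp; ring
  simp only [hw_eq, deriv_const_mul_field', mul_pow, integral_const_mul, h2σ]
  rw [← key]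
  ring
end

section
/- Given a > 0, c > 0 and a parameter ε ∈ (0, 1), for all sufficiently small ε there exists a unique ρ > 0 solving e^{-ρ} = ε² c ρ, and it satisfies ρ = 2|ln ε| - ln(2|ln ε|) - ln c + O(ln(2|ln ε|)/|ln ε|) as ε → 0. -/
/-!
Writing `L = |log ε|`, the equation `exp (-ρ) = ε² c ρ` reads `ρ * exp ρ = (ε² c)⁻¹`, which has exactly
one positive root because `x ↦ x * exp x` increases from `0` to `∞` on `[0, ∞)`. Taking logarithms,
the root satisfies `ρ + log ρ = 2L - log c`, so the error term `ρ - (2L - log (2L) - log c)` equals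
`log (2L / ρ)`. The same equation traps `ρ` between `L / 2` and `2L + |log c|`, and `log t ≤ t - 1`
applied to `ρ / 2L` and to `2L / ρ` bounds this logarithm by `O(log (2L) / L)`.
-/

open Real Set

lemma strictMonoOn_mul_exp : StrictMonoOn (fun x : ℝ => x * exp x) (Ici 0) :=
  fun x hx _ _ hxy => mul_lt_mul'' hxy (exp_lt_exp.2 hxy) hx (exp_pos x).le

lemma existsUnique_pos_mul_exp_eq {T : ℝ} (hT : 0 < T) : ∃! x : ℝ, 0 < x ∧ x * exp x = T := by
  have hT_le : T ≤ T * exp T := le_mul_of_one_le_right hT.le (one_le_exp hT.le)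
  obtain ⟨x, hx, hxT⟩ := intermediate_value_Icc hT.le
    (continuous_id.mul continuous_exp).continuousOn (show T ∈ Icc (0 * exp 0) (T * exp T) by
      simpa using And.intro hT.le hT_le)
  have hx0 : x ≠ 0 := by
    rintro rfl
    simp [hT.ne] at hxT
  exact ⟨x, ⟨hx.1.lt_of_ne (Ne.symm hx0), hxT⟩, fun y ⟨hy, hyT⟩ =>
    strictMonoOn_mul_exp.injOn (mem_Ici.2 hy.le) (mem_Ici.2 hx.1) (hyT.trans hxT.symm)⟩

lemma exp_neg_eq_mul_iff {a x : ℝ} (ha : a ≠ 0) : exp (-x) = a * x ↔ x * exp x = a⁻¹ := by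
  rw [exp_neg]
  field_simp
  constructor <;> intro h <;> linarith

lemma add_log_eq_of_exp_neg_eq {ε c ρ : ℝ} (hε : 0 < ε) (hc : 0 < c) (hρ : 0 < ρ)
    (h : exp (-ρ) = ε ^ 2 * c * ρ) : ρ + log ρ = 2 * -log ε - log c := by
  have := congrArg log h
  rw [log_exp, log_mul (by positivity) hρ.ne', log_mul (by positivity) hc.ne', log_pow] at this
  push_cast at this
  linarith

section

variable {L k ρ : ℝ}

lemma one_le_log_two_mul (hL : 2 ≤ L) : 1 ≤ log (2 * L) := by
  rw [le_log_iff_exp_le (by linarith)]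
  linarith [exp_one_lt_d9]

lemma half_le_of_add_log_eq (hρ : 0 < ρ) (hL : |k| ≤ L) (h : ρ + log ρ = 2 * L - k) :
    L / 2 ≤ ρ := by
  linarith [log_le_sub_one_of_pos hρ, le_abs_self k]

lemma log_sub_log_two_mul_le (hρ : 0 < ρ) (hL : |k| + 2 ≤ L) (h : ρ + log ρ = 2 * L - k) :
    log ρ - log (2 * L) ≤ |k| / (2 * L) := by
  have hL0 : 0 < 2 * L := by linarith [abs_nonneg k]
  have hlogρ : 0 ≤ log ρ :=
    log_nonneg (by linarith [half_le_of_add_log_eq hρ (by linarith) h, abs_nonneg k])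
  rw [← log_div hρ.ne' hL0.ne']
  calc log (ρ / (2 * L)) ≤ ρ / (2 * L) - 1 := log_le_sub_one_of_pos (by positivity)
    _ = (ρ - 2 * L) / (2 * L) := by rw [sub_div, div_self hL0.ne']
    _ ≤ |k| / (2 * L) := by gcongr; linarith [neg_abs_le k]

lemma log_two_mul_sub_log_le (hρ : 0 < ρ) (hL : |k| + 2 ≤ L) (h : ρ + log ρ = 2 * L - k) :
    log (2 * L) - log ρ ≤ (2 * |k| + 4) * log (2 * L) / L := by
  have hk := abs_nonneg k
  have hL0 : 0 < L := by linarith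
  have hD := one_le_log_two_mul (show 2 ≤ L by linarith)
  have hhalf := half_le_of_add_log_eq hρ (by linarith) h
  have hlogρ : 0 ≤ log ρ := log_nonneg (by linarith)
  have hlogρ_le : log ρ ≤ 2 * log (2 * L) := by
    have hρ_le : ρ ≤ 2 * (2 * L) := by linarith [neg_abs_le k]
    calc log ρ ≤ log (2 * (2 * L)) := log_le_log hρ hρ_le
      _ = log 2 + log (2 * L) := log_mul two_ne_zero (by linarith)
      _ ≤ 2 * log (2 * L) := by linarith [log_le_sub_one_of_pos two_pos]
  rw [← log_div (by linarith) hρ.ne']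
  calc log (2 * L / ρ) ≤ 2 * L / ρ - 1 := log_le_sub_one_of_pos (by positivity)
    _ = (k + log ρ) / ρ := by field_simp; linarith
    _ ≤ (|k| + log ρ) / (L / 2) := by
      gcongr ?_ / ?_
      linarith [le_abs_self k]
    _ ≤ (|k| * log (2 * L) + 2 * log (2 * L)) / (L / 2) := by
      gcongr
      exact le_mul_of_one_le_right hk hD
    _ = (2 * |k| + 4) * log (2 * L) / L := by field_simp; ring

lemma abs_log_two_mul_sub_log_le (hρ : 0 < ρ) (hL : |k| + 2 ≤ L) (h : ρ + log ρ = 2 * L - k) :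
    |log (2 * L) - log ρ| ≤ (2 * |k| + 4) * log (2 * L) / L := by
  have hk := abs_nonneg k
  have hL0 : 0 < L := by linarith
  have hD := one_le_log_two_mul (show 2 ≤ L by linarith)
  have hlow : |k| / (2 * L) ≤ (2 * |k| + 4) * log (2 * L) / L := by
    rw [div_le_div_iff₀ (by linarith) hL0]
    nlinarith [mul_le_mul_of_nonneg_left hD (by positivity : 0 ≤ (2 * |k| + 4) * (2 * L))]
  rw [abs_le]
  exact ⟨by linarith [log_sub_log_two_mul_le hρ hL h], log_two_mul_sub_log_le hρ hL h⟩

end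

theorem stmt_10_general (c : ℝ) (hc : 0 < c) :
    ∃ C : ℝ, 0 < C ∧ ∃ ε₀ : ℝ, 0 < ε₀ ∧ ε₀ < 1 ∧
      ∀ ε : ℝ, 0 < ε → ε < ε₀ →
        (∃! ρ : ℝ, 0 < ρ ∧ Real.exp (-ρ) = ε ^ 2 * c * ρ) ∧
        (∀ ρ : ℝ, 0 < ρ → Real.exp (-ρ) = ε ^ 2 * c * ρ →
          |ρ - (2 * |Real.log ε| - Real.log (2 * |Real.log ε|) - Real.log c)|
            ≤ C * Real.log (2 * |Real.log ε|) / |Real.log ε|) := by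
  refine ⟨2 * |log c| + 4, by positivity, exp (-(|log c| + 2)), exp_pos _,
    exp_lt_one_iff.2 (by linarith [abs_nonneg (log c)]), fun ε hε hεε₀ => ?_⟩
  have hlogε : log ε < -(|log c| + 2) := (log_lt_iff_lt_exp hε).2 hεε₀
  have habs : |log ε| = -log ε := abs_of_neg (by linarith [abs_nonneg (log c)])
  refine ⟨?_, fun ρ hρ hρε => ?_⟩
  · simpa only [exp_neg_eq_mul_iff (by positivity : ε ^ 2 * c ≠ 0)]
      using existsUnique_pos_mul_exp_eq (by positivity)
  · have hρlog := add_log_eq_of_exp_neg_eq hε hc hρ hρε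
    rw [habs, show ρ - (2 * -log ε - log (2 * -log ε) - log c) = log (2 * -log ε) - log ρ by
      linarith]
    exact abs_log_two_mul_sub_log_le hρ (by linarith) hρlog

theorem stmt_10 (a c : ℝ) (ha : 0 < a) (hc : 0 < c) :
    ∃ C : ℝ, 0 < C ∧ ∃ ε₀ : ℝ, 0 < ε₀ ∧ ε₀ < 1 ∧
      ∀ ε : ℝ, 0 < ε → ε < ε₀ →
        (∃! ρ : ℝ, 0 < ρ ∧ Real.exp (-ρ) = ε ^ 2 * c * ρ) ∧
        (∀ ρ : ℝ, 0 < ρ → Real.exp (-ρ) = ε ^ 2 * c * ρ →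
          |ρ - (2 * |Real.log ε| - Real.log (2 * |Real.log ε|) - Real.log c)|
            ≤ C * Real.log (2 * |Real.log ε|) / |Real.log ε|) :=
  stmt_10_general c hc
end
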